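/- Let 𝐀 = 𝐀^∀ + 𝐀^∃ be a square interval matrix with disjoint quantifier split, and define Ã by ã_{ii} = mig(𝐚^∀_{ii}) + mag(𝐚^∃_{ii}) and ã_{ij} = −mag(𝐚^∀_{ij}) − mig(𝐚^∃_{ij}) for i ≠ j. Then 𝐀 is an AE H-matrix (for every A^∀ ∈ 𝐀^∀ there exists A^∃ ∈ 𝐀^∃ such that A^∀ + A^∃ is an H-matrix) if and only if Ã is an M-matrix. -/
import Mathlib


/-- `A` is an M-matrix: off-diagonal entries nonpositive and some `x > 0` with `Ax > 0`. -/
def IsMMatrix {n : ℕ} (A : Matrix (Fin n) (Fin n) ℝ) : Prop :=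
  (∀ i j, i ≠ j → A i j ≤ 0) ∧ ∃ x : Fin n → ℝ, (∀ i, 0 < x i) ∧ ∀ i, 0 < A.mulVec x i

/-- The comparison matrix `⟨A⟩`. -/
def compMatrix {n : ℕ} (A : Matrix (Fin n) (Fin n) ℝ) : Matrix (Fin n) (Fin n) ℝ :=
  Matrix.of fun i j => if i = j then |A i i| else -|A i j|

/-- `A` is an H-matrix if `⟨A⟩` is an M-matrix. -/
def IsHMatrix {n : ℕ} (A : Matrix (Fin n) (Fin n) ℝ) : Prop :=
  IsMMatrix (compMatrix A)

/-- Magnitude of the interval `[l,u]`. -/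
noncomputable def mag (l u : ℝ) : ℝ := max |l| |u|

/-- Mignitude of the interval `[l,u]`. -/
noncomputable def mig (l u : ℝ) : ℝ := if l ≤ 0 ∧ 0 ≤ u then 0 else min |l| |u|

lemma mag_nonneg' (l u : ℝ) : 0 ≤ mag l u := le_max_of_le_left (abs_nonneg l)

lemma mig_nonneg' (l u : ℝ) : 0 ≤ mig l u := by
  unfold mig; split
  · exact le_refl 0
  · exact le_min (abs_nonneg l) (abs_nonneg u)

lemma mag_zero' : mag 0 0 = 0 := by simp [mag]
lemma mig_zero' : mig 0 0 = 0 := by simp [mig]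

lemma abs_le_mag {l u a : ℝ} (h1 : l ≤ a) (h2 : a ≤ u) : |a| ≤ mag l u := by
  rcases le_or_gt 0 a with h | h
  · rw [abs_of_nonneg h]
    exact le_trans (h2.trans (le_abs_self u)) (le_max_right _ _)
  · rw [abs_of_neg h]
    exact le_trans ((neg_le_neg h1).trans (neg_le_abs l)) (le_max_left _ _)

lemma mig_le_abs {l u a : ℝ} (h1 : l ≤ a) (h2 : a ≤ u) : mig l u ≤ |a| := by
  unfold mig; split
  · exact abs_nonneg a
  · next h =>
    rcases not_and_or.mp h with h | h
    · push_neg at h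
      have ha : 0 < a := lt_of_lt_of_le h h1
      rw [abs_of_pos ha]
      exact le_trans (min_le_left _ _) ((abs_of_pos h).le.trans h1)
    · push_neg at h
      have ha : a < 0 := lt_of_le_of_lt h2 h
      rw [abs_of_neg ha]
      refine le_trans (min_le_right _ _) ?_
      rw [abs_of_neg h]
      linarith

/-- A point of `[l,u]` attaining the magnitude. -/
noncomputable def pickMag (l u : ℝ) : ℝ := if |l| ≤ |u| then u else l

lemma pickMag_spec {l u : ℝ} (h : l ≤ u) :
    l ≤ pickMag l u ∧ pickMag l u ≤ u ∧ |pickMag l u| = mag l u := by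
  unfold pickMag mag; split
  · next hc => exact ⟨h, le_refl u, (max_eq_right hc).symm⟩
  · next hc => exact ⟨le_refl l, h, (max_eq_left (le_of_not_ge hc)).symm⟩

lemma pickMag_zero : pickMag 0 0 = 0 := by simp [pickMag]

/-- A point of `[l,u]` attaining the mignitude. -/
noncomputable def pickMig (l u : ℝ) : ℝ :=
  if l ≤ 0 ∧ 0 ≤ u then 0 else if |l| ≤ |u| then l else u

lemma pickMig_spec {l u : ℝ} (h : l ≤ u) :
    l ≤ pickMig l u ∧ pickMig l u ≤ u ∧ |pickMig l u| = mig l u := by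
  unfold pickMig mig; split
  · next hc => exact ⟨hc.1, hc.2, abs_zero⟩
  · split
    · next hc => exact ⟨le_refl l, h, (min_eq_left hc).symm⟩
    · next hc => exact ⟨h, le_refl u, (min_eq_right (le_of_not_ge hc)).symm⟩

lemma pickMig_zero : pickMig 0 0 = 0 := by simp [pickMig]

lemma mulVec_mono {n : ℕ} {A B : Matrix (Fin n) (Fin n) ℝ} {x : Fin n → ℝ}
    (hx : ∀ i, 0 < x i) (i : Fin n) (h : ∀ j, A i j ≤ B i j) :
    A.mulVec x i ≤ B.mulVec x i := by
  simp only [Matrix.mulVec, dotProduct]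
  exact Finset.sum_le_sum fun j _ => mul_le_mul_of_nonneg_right (h j) (hx j).le

/-- `𝐀 = 𝐀^∀ + 𝐀^∃` (disjoint split) is an AE H-matrix iff `Ã` with
`ã_ii = mig(𝐚^∀_ii) + mag(𝐚^∃_ii)` and `ã_ij = -mag(𝐚^∀_ij) - mig(𝐚^∃_ij)` (i ≠ j) is an
M-matrix. -/
theorem aeHMatrix_iff {n : ℕ} (LA UA LE UE : Matrix (Fin n) (Fin n) ℝ)
    (hA : ∀ i j, LA i j ≤ UA i j) (hE : ∀ i j, LE i j ≤ UE i j)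
    (hdisj : ∀ i j, (LA i j = 0 ∧ UA i j = 0) ∨ (LE i j = 0 ∧ UE i j = 0)) :
    (∀ Af : Matrix (Fin n) (Fin n) ℝ,
        (∀ i j, LA i j ≤ Af i j ∧ Af i j ≤ UA i j) →
        ∃ Ae : Matrix (Fin n) (Fin n) ℝ,
          (∀ i j, LE i j ≤ Ae i j ∧ Ae i j ≤ UE i j) ∧ IsHMatrix (Af + Ae)) ↔
    IsMMatrix (Matrix.of fun i j =>
        if i = j then mig (LA i i) (UA i i) + mag (LE i i) (UE i i)
        else -mag (LA i j) (UA i j) - mig (LE i j) (UE i j)) := by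
  set T : Matrix (Fin n) (Fin n) ℝ := Matrix.of fun i j =>
      if i = j then mig (LA i i) (UA i i) + mag (LE i i) (UE i i)
      else -mag (LA i j) (UA i j) - mig (LE i j) (UE i j) with hT
  constructor
  · -- forward: AE H-matrix → T is an M-matrix
    intro hAE
    set Af : Matrix (Fin n) (Fin n) ℝ := Matrix.of fun i j =>
        if i = j then pickMig (LA i i) (UA i i) else pickMag (LA i j) (UA i j) with hAfdef
    have hAfmem : ∀ i j, LA i j ≤ Af i j ∧ Af i j ≤ UA i j := by
      intro i j
      by_cases hij : i = j
      · subst hij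
        simp only [hAfdef, Matrix.of_apply, if_pos rfl]
        obtain ⟨h1, h2, _⟩ := pickMig_spec (hA i i)
        exact ⟨h1, h2⟩
      · simp only [hAfdef, Matrix.of_apply, if_neg hij]
        obtain ⟨h1, h2, _⟩ := pickMag_spec (hA i j)
        exact ⟨h1, h2⟩
    obtain ⟨Ae, hAemem, hoff, x, hx, hvec⟩ := hAE Af hAfmem
    -- entrywise: compMatrix (Af + Ae) ≤ T
    have hle : ∀ i j, compMatrix (Af + Ae) i j ≤ T i j := by
      intro i j
      by_cases hij : i = j
      · subst hij
        simp only [compMatrix, hT, Matrix.of_apply, if_pos rfl, Matrix.add_apply]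
        rcases hdisj i i with ⟨hL, hU⟩ | ⟨hL, hU⟩
        · have hAf0 : Af i i = 0 := by
            simp only [hAfdef, Matrix.of_apply, if_pos rfl, hL, hU, pickMig_zero, if_true]
          rw [hAf0, zero_add, hL, hU, mig_zero', zero_add]
          exact abs_le_mag (hAemem i i).1 (hAemem i i).2
        · have hAe0 : Ae i i = 0 := le_antisymm (hU ▸ (hAemem i i).2) (hL ▸ (hAemem i i).1)
          rw [hAe0, add_zero, hL, hU, mag_zero', add_zero]
          simp only [hAfdef, Matrix.of_apply, if_pos rfl]
          exact (pickMig_spec (hA i i)).2.2.le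
      · simp only [compMatrix, hT, Matrix.of_apply, if_neg hij, Matrix.add_apply]
        rcases hdisj i j with ⟨hL, hU⟩ | ⟨hL, hU⟩
        · have hAf0 : Af i j = 0 := by
            simp only [hAfdef, Matrix.of_apply, if_neg hij, hL, hU, pickMag_zero, if_true]
          rw [hAf0, zero_add, hL, hU, mag_zero']
          have := mig_le_abs (hAemem i j).1 (hAemem i j).2
          linarith
        · have hAe0 : Ae i j = 0 := le_antisymm (hU ▸ (hAemem i j).2) (hL ▸ (hAemem i j).1)
          rw [hAe0, add_zero, hL, hU, mig_zero']
          have hAfv : |Af i j| = mag (LA i j) (UA i j) := by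
            simp only [hAfdef, Matrix.of_apply, if_neg hij]
            exact (pickMag_spec (hA i j)).2.2
          linarith [hAfv.ge]
    refine ⟨?_, x, hx, ?_⟩
    · intro i j hij
      simp only [hT, Matrix.of_apply, if_neg hij]
      have h1 := mag_nonneg' (LA i j) (UA i j)
      have h2 := mig_nonneg' (LE i j) (UE i j)
      linarith
    · intro i
      exact lt_of_lt_of_le (hvec i) (mulVec_mono hx i fun j => hle i j)
  · -- backward: T is an M-matrix → AE H-matrix
    rintro ⟨_, x, hx, hvec⟩ Af hAfmem
    set Ae : Matrix (Fin n) (Fin n) ℝ := Matrix.of fun i j =>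
        if i = j then pickMag (LE i i) (UE i i) else pickMig (LE i j) (UE i j) with hAedef
    have hAemem : ∀ i j, LE i j ≤ Ae i j ∧ Ae i j ≤ UE i j := by
      intro i j
      by_cases hij : i = j
      · subst hij
        simp only [hAedef, Matrix.of_apply, if_pos rfl]
        obtain ⟨h1, h2, _⟩ := pickMag_spec (hE i i)
        exact ⟨h1, h2⟩
      · simp only [hAedef, Matrix.of_apply, if_neg hij]
        obtain ⟨h1, h2, _⟩ := pickMig_spec (hE i j)
        exact ⟨h1, h2⟩
    refine ⟨Ae, hAemem, ?_, x, hx, ?_⟩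
    · intro i j hij
      simp only [compMatrix, Matrix.of_apply, if_neg hij]
      exact neg_nonpos.mpr (abs_nonneg _)
    · -- entrywise: T ≤ compMatrix (Af + Ae)
      have hle : ∀ i j, T i j ≤ compMatrix (Af + Ae) i j := by
        intro i j
        by_cases hij : i = j
        · subst hij
          simp only [compMatrix, hT, Matrix.of_apply, if_pos rfl, Matrix.add_apply]
          rcases hdisj i i with ⟨hL, hU⟩ | ⟨hL, hU⟩
          · have hAf0 : Af i i = 0 := le_antisymm (hU ▸ (hAfmem i i).2) (hL ▸ (hAfmem i i).1)
            rw [hAf0, zero_add, hL, hU, mig_zero', zero_add]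
            simp only [hAedef, Matrix.of_apply, if_pos rfl]
            exact (pickMag_spec (hE i i)).2.2.ge
          · have hAe0 : Ae i i = 0 := by
              simp only [hAedef, Matrix.of_apply, if_pos rfl, hL, hU, pickMag_zero, if_true]
            rw [hAe0, add_zero, hL, hU, mag_zero', add_zero]
            exact mig_le_abs (hAfmem i i).1 (hAfmem i i).2
        · simp only [compMatrix, hT, Matrix.of_apply, if_neg hij, Matrix.add_apply]
          rcases hdisj i j with ⟨hL, hU⟩ | ⟨hL, hU⟩
          · have hAf0 : Af i j = 0 := le_antisymm (hU ▸ (hAfmem i j).2) (hL ▸ (hAfmem i j).1)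
            rw [hAf0, zero_add, hL, hU, mag_zero']
            have hAev : |Ae i j| = mig (LE i j) (UE i j) := by
              simp only [hAedef, Matrix.of_apply, if_neg hij]
              exact (pickMig_spec (hE i j)).2.2
            linarith [hAev.le]
          · have hAe0 : Ae i j = 0 := by
              simp only [hAedef, Matrix.of_apply, if_neg hij, hL, hU, pickMig_zero, if_true]
            rw [hAe0, add_zero, hL, hU, mig_zero']
            have := abs_le_mag (hAfmem i j).1 (hAfmem i j).2
            linarith
      intro i
      exact lt_of_lt_of_le (hvec i) (mulVec_mono hx i fun j => hle i j)
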